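/- arXiv:2307.09790 — 2 statements merged into one kernel-verified Lean document; each statement's English description precedes it below -/
import Mathlib

section
/- Let p be a geodesic path in Γ(G,X⊔H) between two vertices and let q be a subpath of p. Then S(q_-,q_+;D) ⊆ S(p_-,p_+;D). -/
open scoped ENNReal

noncomputable section

namespace ArXiv

/-! ### Gromov products, hyperbolicity and the Gromov boundary,
for a general distance function -/

variable {α : Type*}

/-- The Gromov product of `x` and `y` at `o` with respect to the distance function `d`. -/
def gprod (d : α → α → ℝ) (x y o : α) : ℝ := (d x o + d y o - d x y) / 2

/-- The four-point δ-hyperbolicity condition. -/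
def HyperbolicWith (d : α → α → ℝ) (δ : ℝ) : Prop :=
  ∀ w x y z : α, min (gprod d x y w) (gprod d y z w) - δ ≤ gprod d x z w

/-- Gromov hyperbolicity of the distance function `d`. -/
def IsHyperbolic (d : α → α → ℝ) : Prop := ∃ δ : ℝ, 0 ≤ δ ∧ HyperbolicWith d δ

/-- A sequence converges to infinity: the Gromov products at some (equivalently, any)
basepoint tend to infinity. -/
def ConvInf (d : α → α → ℝ) (x : ℕ → α) : Prop :=
  ∀ o : α, ∀ R : ℝ, ∃ N : ℕ, ∀ i, N ≤ i → ∀ j, N ≤ j → R ≤ gprod d (x i) (x j) o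

/-- Sequences converging to infinity. -/
abbrev BSeq (d : α → α → ℝ) := {x : ℕ → α // ConvInf d x}

/-- The equivalence of sequences converging to infinity defining the Gromov boundary. -/
def BRel (d : α → α → ℝ) (x y : BSeq d) : Prop :=
  ∀ o : α, ∀ R : ℝ, ∃ N : ℕ, ∀ i, N ≤ i → ∀ j, N ≤ j → R ≤ gprod d (x.1 i) (y.1 j) o

/-- The (sequential) Gromov boundary of `(α, d)`. -/
abbrev Bdry (d : α → α → ℝ) := Quot (BRel d)

/-- The extension of the Gromov product at `o` to boundary points. -/
def bgp (d : α → α → ℝ) (o : α) (ξ η : Bdry d) : EReal :=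
  sSup {r : EReal | ∃ x y : BSeq d, Quot.mk (BRel d) x = ξ ∧ Quot.mk (BRel d) y = η ∧
    r = Filter.liminf
      (fun pq : ℕ × ℕ => ((gprod d (x.1 pq.1) (y.1 pq.2) o : ℝ) : EReal)) Filter.atTop}

/-- The canonical topology on the Gromov boundary, generated by the sets
`{η | (ξ,η)_o > n}`. -/
def bdryTop (d : α → α → ℝ) : TopologicalSpace (Bdry d) :=
  TopologicalSpace.generateFrom
    {U : Set (Bdry d) | ∃ (ξ : Bdry d) (o : α) (n : ℝ), U = {η | (n : EReal) < bgp d o ξ η}}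

/-! ### Relative Cayley graphs and hyperbolically embedded subgroups -/

variable {G : Type*} [Group G] {Λ : Type*}

/-- Labels of (positive) edges of the relative Cayley graph `Γ(G, X ⊔ H)`:
letters from `X` and letters from `H_λ \ {1}`, for each `λ`, with disjoint unions
taken as sets of labels. -/
inductive RelLab (X : Set G) (H : Λ → Subgroup G) : Type _
  | xlab (g : G) (hg : g ∈ X) : RelLab X H
  | hlab (l : Λ) (g : G) (hg : g ∈ H l) (hne : g ≠ 1) : RelLab X H

/-- The group element underlying a label. -/
def RelLab.val {X : Set G} {H : Λ → Subgroup G} : RelLab X H → G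
  | .xlab g _ => g
  | .hlab _ g _ _ => g

/-- The label is a letter of `H l`. -/
def RelLab.isH {X : Set G} {H : Λ → Subgroup G} (l : Λ) : RelLab X H → Prop
  | .xlab _ _ => False
  | .hlab l' _ _ _ => l' = l

/-- The value of a directed edge: an edge together with an orientation
(the Cayley graph being undirected, an edge may be traversed both ways). -/
def edgeVal {X : Set G} {H : Λ → Subgroup G} (e : RelLab X H × Bool) : G :=
  if e.2 then e.1.val else e.1.val⁻¹

/-- The `i`-th vertex of the edge path starting at `f` and reading the directed
edges of `L`. -/
def chainVert {X : Set G} {H : Λ → Subgroup G} (f : G) (L : List (RelLab X H × Bool))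
    (i : ℕ) : G :=
  f * ((L.take i).map edgeVal).prod

/-- The graph metric `d_{X∪H}` of the relative Cayley graph `Γ(G, X ⊔ H)`. -/
def rdist (X : Set G) (H : Λ → Subgroup G) (f g : G) : ℝ :=
  sInf {r : ℝ | ∃ L : List (RelLab X H × Bool),
    f * (L.map edgeVal).prod = g ∧ r = (L.length : ℝ)}

/-- Distance from a point to a set in `Γ(G, X ⊔ H)`. -/
def rdistPtSet (X : Set G) (H : Λ → Subgroup G) (f : G) (B : Set G) : ℝ :=
  sInf {r : ℝ | ∃ b ∈ B, r = rdist X H f b}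

/-- Distance between two sets in `Γ(G, X ⊔ H)`. -/
def rdistSets (X : Set G) (H : Λ → Subgroup G) (A B : Set G) : ℝ :=
  sInf {r : ℝ | ∃ a ∈ A, ∃ b ∈ B, r = rdist X H a b}

/-- The relative metric `d̂_λ`: the infimum of the lengths of paths in `Γ(G, X ⊔ H)`
from `f` to `g` containing no edge of the subgraph `Γ(H_λ, H_λ∖{1})`
(`∞` if there is no such path). -/
def hatd (X : Set G) (H : Λ → Subgroup G) (l : Λ) (f g : G) : ℝ≥0∞ :=
  sInf {r : ℝ≥0∞ | ∃ L : List (RelLab X H × Bool),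
    f * (L.map edgeVal).prod = g ∧
    (∀ i : ℕ, ∀ e ∈ L[i]?, ¬(chainVert f L i ∈ H l ∧ (Prod.fst e).isH l)) ∧
    r = (L.length : ℝ≥0∞)}

/-- `{H_λ}_{λ∈Λ}` is hyperbolically embedded in `(G, X)`:
`X ∪ ⋃ H_λ` generates `G`, the relative Cayley graph is hyperbolic, and each
relative metric `d̂_λ` is locally finite. -/
def HypEmb (X : Set G) (H : Λ → Subgroup G) : Prop :=
  Subgroup.closure (X ∪ ⋃ l : Λ, (H l : Set G)) = ⊤ ∧
  IsHyperbolic (rdist X H) ∧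
  ∀ (l : Λ) (n : ℕ), {h : G | h ∈ H l ∧ hatd X H l 1 h ≤ (n : ℝ≥0∞)}.Finite

/-- Paths (finite, when `len = n`, or infinite rays, when `len = ⊤`) in the relative
Cayley graph `Γ(G, X ⊔ H)`. -/
structure RPath (X : Set G) (H : Λ → Subgroup G) where
  len : ℕ∞
  vert : ℕ → G
  lab : ℕ → RelLab X H × Bool
  step : ∀ i : ℕ, (i : ℕ∞) < len → vert (i + 1) = vert i * edgeVal (lab i)

namespace RPath

variable {X : Set G} {H : Λ → Subgroup G}

/-- A path is geodesic. -/
def IsGeodesic (p : RPath X H) : Prop :=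
  ∀ i j : ℕ, i ≤ j → (j : ℕ∞) ≤ p.len →
    rdist X H (p.vert i) (p.vert j) = ((j - i : ℕ) : ℝ)

/-- A (necessarily finite) path goes from `f` to `g`. -/
def FromTo (p : RPath X H) (f g : G) : Prop :=
  p.vert 0 = f ∧ ∃ n : ℕ, p.len = (n : ℕ∞) ∧ p.vert n = g

/-- An infinite path. -/
def IsRay (p : RPath X H) : Prop := p.len = ⊤

/-- `q` is a subpath of `p`. -/
def IsSubpath (q p : RPath X H) : Prop :=
  ∃ a : ℕ, ((a : ℕ∞) + q.len ≤ p.len) ∧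
    (∀ k : ℕ, (k : ℕ∞) ≤ q.len → q.vert k = p.vert (a + k)) ∧
    (∀ k : ℕ, (k : ℕ∞) < q.len → q.lab k = p.lab (a + k))

/-- `p` penetrates the coset `B` of `H l` with entrance point `p.vert i` and exit point
`p.vert j`: the edges `i,…,j-1` form an `H l`-component of `p` starting in `B`. -/
def PenetratesAt (p : RPath X H) (l : Λ) (B : Set G) (i j : ℕ) : Prop :=
  i < j ∧ (j : ℕ∞) ≤ p.len ∧ p.vert i ∈ B ∧
  (∀ k : ℕ, i ≤ k → k < j → (p.lab k).1.isH l) ∧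
  (i = 0 ∨ ¬ (p.lab (i - 1)).1.isH l) ∧
  ((j : ℕ∞) = p.len ∨ ¬ (p.lab j).1.isH l)

/-- `p` penetrates the coset `B` of `H l`. -/
def Penetrates (p : RPath X H) (l : Λ) (B : Set G) : Prop :=
  ∃ i j : ℕ, p.PenetratesAt l B i j

/-- `p` essentially penetrates the coset `B` of `H l` (with parameter `D`). -/
def EssPenetrates (p : RPath X H) (l : Λ) (B : Set G) (Dc : ℝ) : Prop :=
  ∃ i j : ℕ, p.PenetratesAt l B i j ∧ ENNReal.ofReal Dc < hatd X H l (p.vert i) (p.vert j)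

end RPath

/-- `B` is a (left) coset of `H l`. -/
def Coset (H : Λ → Subgroup G) (l : Λ) (B : Set G) : Prop :=
  ∃ x : G, B = {g : G | x⁻¹ * g ∈ H l}

/-- The set `S(f,g;D)` of `(f,g;D)`-separating cosets: cosets (recorded together with
the index of their subgroup) essentially penetrated by some geodesic of `Γ(G,X⊔H)`
from `f` to `g`. -/
def Sep (X : Set G) (H : Λ → Subgroup G) (Dc : ℝ) (f g : G) : Set (Λ × Set G) :=
  {lB | Coset H lB.1 lB.2 ∧
    ∃ p : RPath X H, p.IsGeodesic ∧ p.FromTo f g ∧ p.EssPenetrates lB.1 lB.2 Dc}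

/-- The set `S(γ;D)` of separating cosets of a geodesic ray. -/
def SepRay (X : Set G) (H : Λ → Subgroup G) (Dc : ℝ) (p : RPath X H) : Set (Λ × Set G) :=
  ⋃ n : ℕ, Sep X H Dc (p.vert 0) (p.vert n)

/-- The set `Y = {y ∈ G | S(1,y;D) = ∅}`. -/
def Yset (X : Set G) (H : Λ → Subgroup G) (Dc : ℝ) : Set G := {y : G | Sep X H Dc 1 y = ∅}

/-- Geodesic polygons in the relative Cayley graph: a closed path of `n` edges,
subdivided into `m` geodesic sides. -/
structure RPolygon (X : Set G) (H : Λ → Subgroup G) where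
  n : ℕ
  m : ℕ
  vert : ℕ → G
  lab : ℕ → RelLab X H × Bool
  step : ∀ i : ℕ, i < n → vert (i + 1) = vert i * edgeVal (lab i)
  closed : vert n = vert 0
  corner : ℕ → ℕ
  corner_zero : corner 0 = 0
  corner_last : corner m = n
  corner_mono : ∀ t : ℕ, t < m → corner t ≤ corner (t + 1)
  sides_geodesic : ∀ t : ℕ, t < m → ∀ i j : ℕ, corner t ≤ i → i ≤ j → j ≤ corner (t + 1) →
    rdist X H (vert i) (vert j) = ((j - i : ℕ) : ℝ)

namespace RPolygon

variable {X : Set G} {H : Λ → Subgroup G}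

/-- An `H l`-component of the polygon, considered cyclically: the cyclic edges
`i,…,j-1` are all labelled in `H l`, maximally so. -/
def CompAt (p : RPolygon X H) (l : Λ) (i j : ℕ) : Prop :=
  i < j ∧ i < p.n ∧ j ≤ i + p.n ∧
  (∀ k : ℕ, i ≤ k → k < j → (p.lab (k % p.n)).1.isH l) ∧
  (j = i + p.n ∨
    (¬ (p.lab ((i + p.n - 1) % p.n)).1.isH l ∧ ¬ (p.lab (j % p.n)).1.isH l))

/-- An isolated `H l`-component of the polygon: one not connected to (i.e. lying in the
same `H l`-coset as) any other `H l`-component of the polygon. -/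
def IsolatedAt (p : RPolygon X H) (l : Λ) (i j : ℕ) : Prop :=
  p.CompAt l i j ∧ ∀ i' j' : ℕ, p.CompAt l i' j' → i' % p.n ≠ i % p.n →
    (p.vert (i % p.n))⁻¹ * p.vert (i' % p.n) ∉ H l

end RPolygon

/-- The property of the constant `C`: for every geodesic `m`-gon in `Γ(G,X⊔H)` and every
isolated `H_λ`-component `a` of it, `d̂_λ(a_-,a_+) ≤ mC`. -/
def CBound (X : Set G) (H : Λ → Subgroup G) (Cc : ℝ) : Prop :=
  ∀ (p : RPolygon X H) (l : Λ) (i j : ℕ), p.IsolatedAt l i j →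
    hatd X H l (p.vert (i % p.n)) (p.vert (j % p.n)) ≤ ENNReal.ofReal ((p.m : ℝ) * Cc)

/-- The vertex sequence of the path `γ` converges to infinity with respect to `d` and
its limit point in the boundary `Bdry d` is `ξ`. -/
def RLim {X : Set G} {H : Λ → Subgroup G} (d : G → G → ℝ) (γ : RPath X H)
    (ξ : Bdry d) : Prop :=
  ∃ h : ConvInf d γ.vert, Quot.mk (BRel d) ⟨γ.vert, h⟩ = ξ

end ArXiv

namespace ArXiv

section AuxLemmas

variable {G : Type*} [Group G] {Λ : Type*} {X : Set G} {H : Λ → Subgroup G}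

lemma isH_edgeVal_mem {l : Λ} (e : RelLab X H × Bool) (h : e.1.isH l) :
    edgeVal e ∈ H l := by
  obtain ⟨lab, b⟩ := e
  cases lab with
  | xlab g hg => exact h.elim
  | hlab l' g hg hne =>
    have hl : l' = l := h
    subst hl
    cases b
    · simpa [edgeVal, RelLab.val] using inv_mem hg
    · simpa [edgeVal, RelLab.val] using hg

lemma edgeVal_flip (e : RelLab X H × Bool) :
    edgeVal (e.1, !e.2) = (edgeVal e)⁻¹ := by
  obtain ⟨lab, b⟩ := e
  cases b <;> simp [edgeVal]

lemma prod_revflip (L : List (RelLab X H × Bool)) :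
    (((L.reverse.map (fun e => (e.1, !e.2))).map edgeVal)).prod
      = ((L.map edgeVal).prod)⁻¹ := by
  induction L with
  | nil => simp
  | cons e t ih =>
    simp only [List.reverse_cons, List.map_append, List.prod_append, List.map_cons,
      List.map_nil, List.prod_cons, List.prod_nil, ih, edgeVal_flip, mul_inv_rev, mul_one]

lemma exists_list (hgen : Subgroup.closure (X ∪ ⋃ l : Λ, (H l : Set G)) = ⊤) (g : G) :
    ∃ L : List (RelLab X H × Bool), (L.map edgeVal).prod = g := by
  have hg : g ∈ Subgroup.closure (X ∪ ⋃ l : Λ, (H l : Set G)) := by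
    rw [hgen]; trivial
  induction hg using Subgroup.closure_induction with
  | mem x hx =>
    rcases hx with hx | hx
    · exact ⟨[(.xlab x hx, true)], by simp [edgeVal, RelLab.val]⟩
    · obtain ⟨s, ⟨l, rfl⟩, hs⟩ := hx
      by_cases hx1 : x = 1
      · exact ⟨[], by simp [hx1]⟩
      · exact ⟨[(.hlab l x hs hx1, true)], by simp [edgeVal, RelLab.val]⟩
  | one => exact ⟨[], by simp⟩
  | mul x y hx hy ihx ihy =>
    obtain ⟨L₁, h₁⟩ := ihx; obtain ⟨L₂, h₂⟩ := ihy
    exact ⟨L₁ ++ L₂, by simp [h₁, h₂]⟩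
  | inv x hx ihx =>
    obtain ⟨L, hL⟩ := ihx
    exact ⟨L.reverse.map (fun e => (e.1, !e.2)), by rw [prod_revflip, hL]⟩

lemma rdist_le_length (u w : G) (L : List (RelLab X H × Bool))
    (h : u * (L.map edgeVal).prod = w) : rdist X H u w ≤ L.length := by
  apply csInf_le
  · exact ⟨0, fun r ⟨L', _, hr⟩ => by rw [hr]; positivity⟩
  · exact ⟨L, h, rfl⟩

lemma rdist_exists (hgen : Subgroup.closure (X ∪ ⋃ l : Λ, (H l : Set G)) = ⊤) (u w : G) :
    ∃ L : List (RelLab X H × Bool),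
      u * (L.map edgeVal).prod = w ∧ rdist X H u w = L.length := by
  classical
  obtain ⟨L₀, hL₀⟩ := exists_list hgen (u⁻¹ * w)
  have hL₀' : u * (L₀.map edgeVal).prod = w := by rw [hL₀]; group
  have hP : ∃ k : ℕ, ∃ L : List (RelLab X H × Bool),
      L.length = k ∧ u * (L.map edgeVal).prod = w := ⟨L₀.length, L₀, rfl, hL₀'⟩
  obtain ⟨L, hLlen, hLw⟩ := Nat.find_spec hP
  refine ⟨L, hLw, le_antisymm (by exact_mod_cast rdist_le_length u w L hLw) ?_⟩
  refine le_csInf ⟨_, L₀, hL₀', rfl⟩ ?_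
  rintro r ⟨L', hw', rfl⟩
  have h := Nat.find_min' hP ⟨L', rfl, hw'⟩
  rw [hLlen]
  exact_mod_cast h

lemma rdist_triangle (hgen : Subgroup.closure (X ∪ ⋃ l : Λ, (H l : Set G)) = ⊤)
    (u w z : G) : rdist X H u z ≤ rdist X H u w + rdist X H w z := by
  obtain ⟨L₁, h₁, e₁⟩ := rdist_exists hgen u w
  obtain ⟨L₂, h₂, e₂⟩ := rdist_exists hgen w z
  have h : u * ((L₁ ++ L₂).map edgeVal).prod = z := by
    rw [List.map_append, List.prod_append, ← mul_assoc, h₁, h₂]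
  calc rdist X H u z ≤ ((L₁ ++ L₂).length : ℝ) := rdist_le_length _ _ _ h
    _ = rdist X H u w + rdist X H w z := by
        rw [e₁, e₂, List.length_append]; push_cast; ring

lemma rdist_le_one_of_memH (l : Λ) (u w : G) (h : u⁻¹ * w ∈ H l) :
    rdist X H u w ≤ 1 := by
  by_cases h1 : u⁻¹ * w = 1
  · have hw : u * (([] : List (RelLab X H × Bool)).map edgeVal).prod = w := by
      rw [inv_mul_eq_one] at h1; simp [h1]
    calc rdist X H u w ≤ (([] : List (RelLab X H × Bool)).length : ℝ) :=
        rdist_le_length _ _ _ hw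
      _ ≤ 1 := by norm_num
  · have hw : u * (([(.hlab l (u⁻¹ * w) h h1, true)] : List (RelLab X H × Bool)).map
        edgeVal).prod = w := by simp [edgeVal, RelLab.val]
    calc rdist X H u w ≤ _ := rdist_le_length _ _ _ hw
      _ ≤ 1 := by norm_num

lemma geodesic_no_two_H (r : RPath X H) (hr : r.IsGeodesic)
    (l : Λ) (k : ℕ) (hlen : ((k + 2 : ℕ) : ℕ∞) ≤ r.len)
    (h1 : (r.lab k).1.isH l) (h2 : (r.lab (k+1)).1.isH l) : False := by
  have hk1 : ((k : ℕ) : ℕ∞) < r.len :=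
    lt_of_lt_of_le (by exact_mod_cast (by omega : k < k + 2)) hlen
  have hk2 : (((k + 1 : ℕ)) : ℕ∞) < r.len :=
    lt_of_lt_of_le (by exact_mod_cast (by omega : k + 1 < k + 2)) hlen
  have s1 := r.step k hk1
  have s2 := r.step (k+1) hk2
  have hmem : (r.vert k)⁻¹ * r.vert (k+2) ∈ H l := by
    have he : (r.vert k)⁻¹ * r.vert (k+2) = edgeVal (r.lab k) * edgeVal (r.lab (k+1)) := by
      rw [show k+2 = k+1+1 from rfl, s2, s1]; group
    rw [he]; exact mul_mem (isH_edgeVal_mem _ h1) (isH_edgeVal_mem _ h2)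
  have hle := rdist_le_one_of_memH (X := X) l _ _ hmem
  have heq := hr k (k+2) (by omega) hlen
  rw [show k+2-k = 2 from by omega] at heq
  rw [heq] at hle
  norm_num at hle

end AuxLemmas

end ArXiv

namespace ArXiv

/-- Lemma 3.1: separating cosets of a subpath of a geodesic are
separating cosets of the whole geodesic. -/
theorem statement5 {G Λ : Type*} [Group G] (X : Set G) (H : Λ → Subgroup G)
    (hemb : HypEmb X H) (Cc : ℝ) (hC : 0 < Cc) (hCB : CBound X H Cc)
    (Dc : ℝ) (hD : 3 * Cc ≤ Dc)
    (p q : RPath X H) (hp : p.IsGeodesic) (f g f' g' : G)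
    (hpf : p.FromTo f g) (hsub : q.IsSubpath p) (hqf : q.FromTo f' g') :
    Sep X H Dc f' g' ⊆ Sep X H Dc f g := by
  classical
  obtain ⟨hgen, -, -⟩ := hemb
  rintro ⟨l, B⟩ ⟨hcos, r, hr, hrf, hre⟩
  obtain ⟨hp0, n, hn, hgn⟩ := hpf
  obtain ⟨a, hlensub, hv, hl⟩ := hsub
  obtain ⟨hq0, m, hqm, hqg⟩ := hqf
  obtain ⟨hr0, m', hrm, hrg⟩ := hrf
  have hf' : p.vert a = f' := by
    have h := hv 0 (by simp)
    rw [hq0] at h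
    simpa using h.symm
  have hg' : p.vert (a + m) = g' := by
    have h := hv m (by rw [hqm])
    rw [hqg] at h
    exact h.symm
  have ham : a + m ≤ n := by
    rw [hqm, hn] at hlensub
    exact_mod_cast hlensub
  have hrd : rdist X H f' g' = (m : ℝ) := by
    have h := hp a (a + m) (Nat.le_add_right a m) (by rw [hn]; exact_mod_cast ham)
    rw [hf', hg'] at h
    simpa using h
  have hm' : m' = m := by
    have h2 := hr 0 m' (Nat.zero_le _) (by rw [hrm])
    rw [hr0, hrg, hrd] at h2
    have h3 : (m : ℝ) = ((m' : ℕ) : ℝ) := by simpa using h2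
    exact_mod_cast h3.symm
  rw [hm'] at hrm hrg
  -- the spliced path
  set vfun : ℕ → G := fun i => if a ≤ i ∧ i ≤ a + m then r.vert (i - a) else p.vert i
    with hvfun
  set lfun : ℕ → RelLab X H × Bool :=
    fun i => if a ≤ i ∧ i < a + m then r.lab (i - a) else p.lab i with hlfun
  have hva : ∀ i, i ≤ a → vfun i = p.vert i := by
    intro i hi
    by_cases h : a ≤ i ∧ i ≤ a + m
    · have hia : i = a := le_antisymm hi h.1
      subst hia
      simp only [hvfun, if_pos h]
      simp [hr0, ← hf']
    · simp only [hvfun, if_neg h]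
  have hvb : ∀ i, a ≤ i → i ≤ a + m → vfun i = r.vert (i - a) := by
    intro i h1 h2
    simp only [hvfun, if_pos (⟨h1, h2⟩ : a ≤ i ∧ i ≤ a + m)]
  have hvc : ∀ i, a + m ≤ i → vfun i = p.vert i := by
    intro i hi
    by_cases h : a ≤ i ∧ i ≤ a + m
    · have hia : i = a + m := le_antisymm h.2 hi
      subst hia
      simp only [hvfun, if_pos h]
      rw [show a + m - a = m from by omega, hrg, hg']
    · simp only [hvfun, if_neg h]
  have hlb : ∀ i, a ≤ i → i < a + m → lfun i = r.lab (i - a) := by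
    intro i h1 h2
    simp only [hlfun, if_pos (⟨h1, h2⟩ : a ≤ i ∧ i < a + m)]
  have hla : ∀ i, ¬(a ≤ i ∧ i < a + m) → lfun i = p.lab i := by
    intro i h
    simp only [hlfun, if_neg h]
  have hstep : ∀ i : ℕ, (i : ℕ∞) < (n : ℕ∞) → vfun (i + 1) = vfun i * edgeVal (lfun i) := by
    intro i hi
    have hin : i < n := by exact_mod_cast hi
    by_cases hc : a ≤ i ∧ i < a + m
    · rw [hvb (i + 1) (by omega) (by omega), hvb i hc.1 (le_of_lt hc.2), hlb i hc.1 hc.2]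
      have hs := r.step (i - a) (by rw [hrm]; exact_mod_cast (by omega : i - a < m))
      rw [show i + 1 - a = (i - a) + 1 from by omega]
      exact hs
    · rw [hla i hc]
      rcases lt_or_ge i a with h | h
      · rw [hva i (le_of_lt h), hva (i + 1) h]
        exact p.step i (by rw [hn]; exact_mod_cast hin)
      · have h2 : a + m ≤ i := by omega
        rw [hvc i h2, hvc (i + 1) (by omega)]
        exact p.step i (by rw [hn]; exact_mod_cast hin)
  have hgeo : ∀ i j : ℕ, i ≤ j → j ≤ n →
      rdist X H (vfun i) (vfun j) = ((j - i : ℕ) : ℝ) := by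
    intro i j hij hjn
    by_cases h1 : j ≤ a
    · rw [hva i (le_trans hij h1), hva j h1]
      exact hp i j hij (by rw [hn]; exact_mod_cast hjn)
    by_cases h2 : a + m ≤ i
    · rw [hvc i h2, hvc j (le_trans h2 hij)]
      exact hp i j hij (by rw [hn]; exact_mod_cast hjn)
    by_cases h3 : a ≤ i
    · by_cases h4 : j ≤ a + m
      · -- both in the middle
        rw [hvb i h3 (by omega), hvb j (by omega) h4]
        have h := hr (i - a) (j - a) (by omega)
          (by rw [hrm]; exact_mod_cast (by omega : j - a ≤ m))
        rw [show j - a - (i - a) = j - i from by omega] at h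
        exact h
      · -- a ≤ i ≤ a+m ≤ j
        have h5 : a + m ≤ j := by omega
        have hu1 : rdist X H (vfun i) (vfun (a + m)) = ((a + m - i : ℕ) : ℝ) := by
          rw [hvb i h3 (by omega), hvb (a + m) (by omega) le_rfl]
          have h := hr (i - a) m (by omega) (by rw [hrm])
          rw [show m - (i - a) = a + m - i from by omega] at h
          rw [show a + m - a = m from by omega]
          exact h
        have hu2 : rdist X H (vfun (a + m)) (vfun j) = ((j - (a + m) : ℕ) : ℝ) := by
          rw [hvc (a + m) le_rfl, hvc j h5]
          exact hp (a + m) j h5 (by rw [hn]; exact_mod_cast hjn)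
        have hl1 : rdist X H (vfun a) (vfun j) = ((j - a : ℕ) : ℝ) := by
          rw [hva a le_rfl, hvc j h5]
          exact hp a j (by omega) (by rw [hn]; exact_mod_cast hjn)
        have hl2 : rdist X H (vfun a) (vfun i) = ((i - a : ℕ) : ℝ) := by
          rw [hvb a le_rfl (by omega), hvb i h3 (by omega)]
          have h := hr (a - a) (i - a) (by omega)
            (by rw [hrm]; exact_mod_cast (by omega : i - a ≤ m))
          rw [show a - a = 0 from by omega] at h
          simpa using h
        have hup := rdist_triangle hgen (vfun i) (vfun (a + m)) (vfun j)
        rw [hu1, hu2, ← Nat.cast_add,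
          show a + m - i + (j - (a + m)) = j - i from by omega] at hup
        have hlo := rdist_triangle hgen (vfun a) (vfun i) (vfun j)
        rw [hl1, hl2] at hlo
        have hc : ((i - a : ℕ) : ℝ) + ((j - i : ℕ) : ℝ) = ((j - a : ℕ) : ℝ) := by
          rw [← Nat.cast_add, show i - a + (j - i) = j - a from by omega]
        linarith
    · -- i < a
      by_cases h4 : j ≤ a + m
      · -- i ≤ a < j ≤ a + m
        have hu1 : rdist X H (vfun i) (vfun a) = ((a - i : ℕ) : ℝ) := by
          rw [hva i (by omega), hva a le_rfl]
          exact hp i a (by omega) (by rw [hn]; exact_mod_cast (by omega : a ≤ n))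
        have hu2 : rdist X H (vfun a) (vfun j) = ((j - a : ℕ) : ℝ) := by
          rw [hvb a le_rfl (by omega), hvb j (by omega) h4]
          have h := hr (a - a) (j - a) (by omega)
            (by rw [hrm]; exact_mod_cast (by omega : j - a ≤ m))
          rw [show a - a = 0 from by omega] at h
          simpa using h
        have hl1 : rdist X H (vfun i) (vfun (a + m)) = ((a + m - i : ℕ) : ℝ) := by
          rw [hva i (by omega), hvc (a + m) le_rfl]
          exact hp i (a + m) (by omega) (by rw [hn]; exact_mod_cast ham)
        have hl2 : rdist X H (vfun j) (vfun (a + m)) = ((a + m - j : ℕ) : ℝ) := by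
          rw [hvb j (by omega) h4, hvb (a + m) (by omega) le_rfl]
          have h := hr (j - a) m (by omega) (by rw [hrm])
          rw [show m - (j - a) = a + m - j from by omega] at h
          rw [show a + m - a = m from by omega]
          exact h
        have hup := rdist_triangle hgen (vfun i) (vfun a) (vfun j)
        rw [hu1, hu2, ← Nat.cast_add,
          show a - i + (j - a) = j - i from by omega] at hup
        have hlo := rdist_triangle hgen (vfun i) (vfun j) (vfun (a + m))
        rw [hl1, hl2] at hlo
        have hc : ((j - i : ℕ) : ℝ) + ((a + m - j : ℕ) : ℝ) = ((a + m - i : ℕ) : ℝ) := by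
          rw [← Nat.cast_add, show j - i + (a + m - j) = a + m - i from by omega]
        linarith
      · -- i ≤ a, a + m ≤ j
        rw [hva i (by omega), hvc j (by omega)]
        exact hp i j hij (by rw [hn]; exact_mod_cast hjn)
  have hp'geo : (⟨(n : ℕ∞), vfun, lfun, hstep⟩ : RPath X H).IsGeodesic := by
    intro i j hij hj
    have hj' : (j : ℕ∞) ≤ (n : ℕ∞) := hj
    exact hgeo i j hij (by exact_mod_cast hj')
  have htwo : ∀ k : ℕ, k + 2 ≤ n → (lfun k).1.isH l → (lfun (k + 1)).1.isH l → False := by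
    intro k hk e1 e2
    refine geodesic_no_two_H ⟨(n : ℕ∞), vfun, lfun, hstep⟩ hp'geo l k ?_ e1 e2
    show ((k + 2 : ℕ) : ℕ∞) ≤ (n : ℕ∞)
    exact_mod_cast hk
  obtain ⟨i, j, ⟨hij, hjlen, hiB, hklab, hml, hmr⟩, hd⟩ := hre
  have hjm : j ≤ m := by
    rw [hrm] at hjlen
    exact_mod_cast hjlen
  have hj1 : j = i + 1 := by
    by_contra hne
    have h2 : i + 2 ≤ j := by omega
    exact geodesic_no_two_H r hr l i
      (by rw [hrm]; exact_mod_cast (by omega : i + 2 ≤ m))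
      (hklab i le_rfl (by omega)) (hklab (i + 1) (by omega) (by omega))
  subst hj1
  have hub : a + i + 1 ≤ n := by omega
  have hlabai : (lfun (a + i)).1.isH l := by
    rw [hlb (a + i) (by omega) (by omega), show a + i - a = i from by omega]
    exact hklab i le_rfl (by omega)
  refine ⟨hcos, ⟨(n : ℕ∞), vfun, lfun, hstep⟩, hp'geo, ⟨?_, n, rfl, ?_⟩,
    a + i, a + i + 1, ⟨by omega, ?_, ?_, ?_, ?_, ?_⟩, ?_⟩
  · show vfun 0 = f
    rw [hva 0 (Nat.zero_le a), hp0]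
  · show vfun n = g
    rw [hvc n ham, hgn]
  · show ((a + i + 1 : ℕ) : ℕ∞) ≤ (n : ℕ∞)
    exact_mod_cast hub
  · show vfun (a + i) ∈ B
    rw [hvb (a + i) (by omega) (by omega), show a + i - a = i from by omega]
    exact hiB
  · intro k hk1 hk2
    have hk : k = a + i := by omega
    subst hk
    exact hlabai
  · by_cases h0 : a + i = 0
    · exact Or.inl h0
    · refine Or.inr fun hH => ?_
      exact htwo (a + i - 1) (by omega) hH
        (by rw [show a + i - 1 + 1 = a + i from by omega]; exact hlabai)
  · by_cases hn' : a + i + 1 = n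
    · refine Or.inl ?_
      show ((a + i + 1 : ℕ) : ℕ∞) = (n : ℕ∞)
      exact_mod_cast hn'
    · refine Or.inr fun hH => ?_
      exact htwo (a + i) (by omega) hlabai hH
  · show ENNReal.ofReal Dc < hatd X H l (vfun (a + i)) (vfun (a + i + 1))
    rw [hvb (a + i) (by omega) (by omega), hvb (a + i + 1) (by omega) (by omega),
      show a + i - a = i from by omega, show a + i + 1 - a = i + 1 from by omega]
    exact hd


end ArXiv
end
end

section
/- Suppose p is a (possibly infinite) geodesic path in Γ(G,X⊔H) starting at p_- ∈ G. If p penetrates two distinct cosets C₀ and C₁ with d_{X∪H}(p_-,C₀) < d_{X∪H}(p_-,C₁), then d_{X∪H}(p_out(C₀), p_in(C₁)) = d_{X∪H}(C₀,C₁), i.e. the distance from the exit point of p in C₀ to the entrance point of p in C₁ equals the distance between the two cosets. -/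
open scoped ENNReal

noncomputable section

namespace ArXiv

section Aux

variable {G : Type*} [Group G] {Λ : Type*} {X : Set G} {H : Λ → Subgroup G}

lemma RelLab.val_mem_of_isH {l : Λ} {e : RelLab X H} (h : e.isH l) : e.val ∈ H l := by
  cases e with
  | xlab g hg => exact absurd h id
  | hlab l' g hg hne => cases h; exact hg

lemma RelLab.isH_unique {l₀ l₁ : Λ} {e : RelLab X H} (h0 : e.isH l₀) (h1 : e.isH l₁) :
    l₀ = l₁ := by
  cases e with
  | xlab g hg => exact absurd h0 id
  | hlab l' g hg hne => exact h0 ▸ h1 ▸ rfl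

lemma edgeVal_mem {l : Λ} {e : RelLab X H × Bool} (h : e.1.isH l) : edgeVal e ∈ H l := by
  rcases e with ⟨a, b⟩
  cases b
  · simpa [edgeVal] using inv_mem (RelLab.val_mem_of_isH h)
  · simpa [edgeVal] using RelLab.val_mem_of_isH h

lemma rdist_bddBelow (f g : G) :
    BddBelow {r : ℝ | ∃ L : List (RelLab X H × Bool),
      f * (L.map edgeVal).prod = g ∧ r = (L.length : ℝ)} := by
  refine ⟨0, ?_⟩
  rintro r ⟨L, -, rfl⟩
  positivity

lemma rdist_nonneg (X : Set G) (H : Λ → Subgroup G) (f g : G) : 0 ≤ rdist X H f g := by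
  apply Real.sInf_nonneg
  rintro r ⟨L, -, rfl⟩
  positivity

lemma rdist_le {f g : G} (L : List (RelLab X H × Bool))
    (hL : f * (L.map edgeVal).prod = g) : rdist X H f g ≤ (L.length : ℝ) :=
  csInf_le (rdist_bddBelow f g) ⟨L, hL, rfl⟩

lemma inv_word_prod (L : List (RelLab X H × Bool)) :
    (((L.map (fun e => (e.1, !e.2))).reverse).map edgeVal).prod
      = ((L.map edgeVal).prod)⁻¹ := by
  induction L with
  | nil => simp
  | cons e L ih =>
    simp only [List.map_cons, List.reverse_cons, List.map_append, List.prod_append]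
    rw [ih]
    simp [edgeVal_flip e]

lemma exists_word (hgen : Subgroup.closure (X ∪ ⋃ l : Λ, (H l : Set G)) = ⊤) (f g : G) :
    ∃ L : List (RelLab X H × Bool), f * (L.map edgeVal).prod = g := by
  suffices h : ∀ g : G, ∃ L : List (RelLab X H × Bool), (L.map edgeVal).prod = g by
    obtain ⟨L, hL⟩ := h (f⁻¹ * g)
    exact ⟨L, by rw [hL]; group⟩
  intro g
  let S : Subgroup G :=
    { carrier := {g : G | ∃ L : List (RelLab X H × Bool), (L.map edgeVal).prod = g}
      one_mem' := ⟨[], by simp⟩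
      mul_mem' := by
        rintro a b ⟨La, rfl⟩ ⟨Lb, rfl⟩
        exact ⟨La ++ Lb, by simp⟩
      inv_mem' := by
        rintro a ⟨La, rfl⟩
        exact ⟨(La.map (fun e => (e.1, !e.2))).reverse, inv_word_prod La⟩ }
  have hsub : X ∪ ⋃ l : Λ, (H l : Set G) ⊆ S := by
    rintro x (hx | hx)
    · exact ⟨[(RelLab.xlab x hx, true)], by simp [edgeVal, RelLab.val]⟩
    · rcases Set.mem_iUnion.mp hx with ⟨l, hl⟩
      by_cases hx1 : x = 1
      · exact ⟨[], by simp [hx1]⟩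
      · exact ⟨[(RelLab.hlab l x hl hx1, true)], by simp [edgeVal, RelLab.val]⟩
  have : Subgroup.closure (X ∪ ⋃ l : Λ, (H l : Set G)) ≤ S := (Subgroup.closure_le S).2 hsub
  rw [hgen] at this
  exact this (Subgroup.mem_top g)

lemma rdist_ge (hgen : Subgroup.closure (X ∪ ⋃ l : Λ, (H l : Set G)) = ⊤) {f g : G} {c : ℝ}
    (hc : ∀ L : List (RelLab X H × Bool), f * (L.map edgeVal).prod = g → c ≤ (L.length : ℝ)) :
    c ≤ rdist X H f g := by
  obtain ⟨L₀, hL₀⟩ := exists_word hgen f g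
  refine le_csInf ⟨(L₀.length : ℝ), L₀, hL₀, rfl⟩ ?_
  rintro r ⟨L, hL, rfl⟩
  exact hc L hL

/-- The word read by `p` along edges `i, …, i+n-1`. -/
def segL (p : RPath X H) (i n : ℕ) : List (RelLab X H × Bool) :=
  (List.range n).map (fun k => p.lab (i + k))

@[simp] lemma segL_length (p : RPath X H) (i n : ℕ) : (segL p i n).length = n := by
  simp [segL]

lemma segL_prod (p : RPath X H) (i : ℕ) : ∀ n : ℕ, ((i + n : ℕ) : ℕ∞) ≤ p.len →
    p.vert i * (((segL p i n)).map edgeVal).prod = p.vert (i + n) := by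
  intro n
  induction n with
  | zero => simp [segL]
  | succ n ih =>
    intro h
    have hle : ((i + n : ℕ) : ℕ∞) ≤ p.len :=
      le_trans (by exact_mod_cast Nat.le_succ (i + n)) h
    have hlt : ((i + n : ℕ) : ℕ∞) < p.len :=
      lt_of_lt_of_le (by exact_mod_cast Nat.lt_succ_self (i + n)) h
    have hseg : segL p i (n + 1) = segL p i n ++ [p.lab (i + n)] := by
      simp [segL, List.range_succ]
    have hstep := p.step (i + n) hlt
    rw [hseg, List.map_append, List.prod_append, ← mul_assoc, ih hle]
    simp [hstep, ← add_assoc]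

lemma prod_mem_of_isH {l : Λ} (L : List (RelLab X H × Bool))
    (h : ∀ e ∈ L, (Prod.fst e).isH l) : (L.map edgeVal).prod ∈ H l := by
  induction L with
  | nil => simpa using one_mem _
  | cons e L ih =>
    simp only [List.map_cons, List.prod_cons]
    exact mul_mem (edgeVal_mem (h e (by simp))) (ih fun e' he' => h e' (by simp [he']))

lemma coset_div_mem {l : Λ} {B : Set G} (hB : Coset H l B) {f g : G}
    (hf : f ∈ B) (hg : g ∈ B) : f⁻¹ * g ∈ H l := by
  obtain ⟨x, rfl⟩ := hB
  have hx : f⁻¹ * g = (x⁻¹ * f)⁻¹ * (x⁻¹ * g) := by group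
  rw [hx]
  exact mul_mem (inv_mem hf) hg

lemma coset_mem_of_div {l : Λ} {B : Set G} (hB : Coset H l B) {f g : G}
    (hf : f ∈ B) (h : f⁻¹ * g ∈ H l) : g ∈ B := by
  obtain ⟨x, rfl⟩ := hB
  have hx : x⁻¹ * g = (x⁻¹ * f) * (f⁻¹ * g) := by group
  exact Set.mem_setOf.mpr (hx ▸ mul_mem hf h)

lemma coset_eq {l : Λ} {B₀ B₁ : Set G} (hB₀ : Coset H l B₀) (hB₁ : Coset H l B₁)
    {v : G} (h0 : v ∈ B₀) (h1 : v ∈ B₁) : B₀ = B₁ := by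
  ext g
  constructor
  · intro hg; exact coset_mem_of_div hB₁ h1 (coset_div_mem hB₀ h0 hg)
  · intro hg; exact coset_mem_of_div hB₀ h0 (coset_div_mem hB₁ h1 hg)

lemma exists_short_word {l : Λ} {f g : G} (h : f⁻¹ * g ∈ H l) :
    ∃ L : List (RelLab X H × Bool),
      f * (L.map edgeVal).prod = g ∧ (L.length : ℝ) ≤ 1 := by
  by_cases hfg : f = g
  · exact ⟨[], by simp [hfg], by simp⟩
  · refine ⟨[(RelLab.hlab l (f⁻¹ * g) h ?_, true)], ?_, by simp⟩
    · intro hone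
      exact hfg (by simpa using (congrArg (f * ·) hone).symm)
    · simp [edgeVal, RelLab.val]

namespace RPath

lemma div_mem_of_penetratesAt {p : RPath X H} {l : Λ} {B : Set G} {i j : ℕ}
    (h : p.PenetratesAt l B i j) : (p.vert i)⁻¹ * p.vert j ∈ H l := by
  obtain ⟨hij, hjlen, hiB, hlab, -, -⟩ := h
  have hprod := segL_prod p i (j - i)
      (by rw [Nat.add_sub_cancel' hij.le]; exact hjlen)
  rw [Nat.add_sub_cancel' hij.le] at hprod
  have : ((segL p i (j - i)).map edgeVal).prod = (p.vert i)⁻¹ * p.vert j := by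
    rw [← hprod]; group
  rw [← this]
  refine prod_mem_of_isH _ ?_
  intro e he
  rcases List.mem_map.mp ((by simpa [segL] using he : e ∈ (List.range (j-i)).map
      (fun k => p.lab (i + k)))) with ⟨k, hk, rfl⟩
  exact hlab (i + k) (by omega) (by simp at hk; omega)

lemma exit_mem {p : RPath X H} {l : Λ} {B : Set G} {i j : ℕ}
    (hB : Coset H l B) (h : p.PenetratesAt l B i j) : p.vert j ∈ B :=
  coset_mem_of_div hB h.2.2.1 (div_mem_of_penetratesAt h)

end RPath

lemma rdistPtSet_le {f : G} {B : Set G} {b : G} (hb : b ∈ B) :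
    rdistPtSet X H f B ≤ rdist X H f b := by
  refine csInf_le ⟨0, ?_⟩ ⟨b, hb, rfl⟩
  rintro r ⟨b', -, rfl⟩
  exact rdist_nonneg X H f b'

lemma rdistPtSet_ge (hgen : Subgroup.closure (X ∪ ⋃ l : Λ, (H l : Set G)) = ⊤)
    {p : RPath X H} {l : Λ} {B : Set G} {i j : ℕ} (hp : p.IsGeodesic) (hB : Coset H l B)
    (h : p.PenetratesAt l B i j) : (i : ℝ) - 1 ≤ rdistPtSet X H (p.vert 0) B := by
  obtain ⟨hij, hjlen, hiB, -, -, -⟩ := h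
  have hilen : (i : ℕ∞) ≤ p.len :=
    le_trans (by exact_mod_cast hij.le : ((i : ℕ∞) ≤ (j : ℕ∞))) hjlen
  have hgeo : rdist X H (p.vert 0) (p.vert i) = (i : ℝ) := by
    have := hp 0 i (Nat.zero_le _) hilen
    simpa using this
  refine le_csInf ⟨rdist X H (p.vert 0) (p.vert i), p.vert i, hiB, rfl⟩ ?_
  rintro r ⟨a, ha, rfl⟩
  refine rdist_ge hgen ?_
  intro L hL
  obtain ⟨E, hE, hElen⟩ := exists_short_word (l := l) (coset_div_mem hB ha hiB)
  have hword : p.vert 0 * (((L ++ E).map edgeVal).prod) = p.vert i := by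
    simp only [List.map_append, List.prod_append, ← mul_assoc]
    rw [hL, hE]
  have hle := rdist_le (L ++ E) hword
  rw [hgeo] at hle
  have hlen : ((L ++ E).length : ℝ) = (L.length : ℝ) + (E.length : ℝ) := by
    simp
  rw [hlen] at hle
  linarith

end Aux

/-- Lemma 3.3: the distance between two cosets is realized by the exit
and entrance points of a geodesic penetrating both. -/
theorem statement7 {G Λ : Type*} [Group G] (X : Set G) (H : Λ → Subgroup G)
    (hemb : HypEmb X H) (l₀ l₁ : Λ) (B₀ B₁ : Set G)
    (hB₀ : Coset H l₀ B₀) (hB₁ : Coset H l₁ B₁)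
    (hne : (⟨l₀, B₀⟩ : Λ × Set G) ≠ ⟨l₁, B₁⟩)
    (p : RPath X H) (hp : p.IsGeodesic)
    (i₀ j₀ i₁ j₁ : ℕ)
    (hpB₀ : p.PenetratesAt l₀ B₀ i₀ j₀) (hpB₁ : p.PenetratesAt l₁ B₁ i₁ j₁)
    (hord : rdistPtSet X H (p.vert 0) B₀ < rdistPtSet X H (p.vert 0) B₁) :
    rdist X H (p.vert j₀) (p.vert i₁) = rdistSets X H B₀ B₁ := by
  obtain ⟨hgen, -, -⟩ := hemb
  obtain ⟨hij₀, hj₀len, hi₀B, hlab₀, hmaxl₀, hmaxr₀⟩ := hpB₀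
  obtain ⟨hij₁, hj₁len, hi₁B, hlab₁, hmaxl₁, hmaxr₁⟩ := hpB₁
  have hpB₀' : p.PenetratesAt l₀ B₀ i₀ j₀ := ⟨hij₀, hj₀len, hi₀B, hlab₀, hmaxl₀, hmaxr₀⟩
  have hpB₁' : p.PenetratesAt l₁ B₁ i₁ j₁ := ⟨hij₁, hj₁len, hi₁B, hlab₁, hmaxl₁, hmaxr₁⟩
  have hj₀B : p.vert j₀ ∈ B₀ := RPath.exit_mem hB₀ hpB₀'
  have hj₁B : p.vert j₁ ∈ B₁ := RPath.exit_mem hB₁ hpB₁'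
  -- Step 1: the geodesic enters B₀ before B₁, i.e. `j₀ ≤ i₁`.
  have horder : j₀ ≤ i₁ := by
    by_contra hcon
    push_neg at hcon
    have hdisj : j₁ ≤ i₀ := by
      by_contra hcon2
      push_neg at hcon2
      by_cases hl : l₀ = l₁
      · subst hl
        have hii : i₀ = i₁ := by
          rcases lt_trichotomy i₀ i₁ with h | h | h
          · have h1 : (p.lab (i₁ - 1)).1.isH l₀ := hlab₀ (i₁ - 1) (by omega) (by omega)
            rcases hmaxl₁ with h0 | hn
            · omega
            · exact absurd h1 hn
          · exact h
          · have h1 : (p.lab (i₀ - 1)).1.isH l₀ := hlab₁ (i₀ - 1) (by omega) (by omega)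
            rcases hmaxl₀ with h0 | hn
            · omega
            · exact absurd h1 hn
        have hBB : B₀ = B₁ := coset_eq hB₀ hB₁ hi₀B (by rw [hii]; exact hi₁B)
        exact hne (by rw [hBB])
      · have hk0 : (p.lab (max i₀ i₁)).1.isH l₀ :=
          hlab₀ _ (le_max_left _ _) (by omega)
        have hk1 : (p.lab (max i₀ i₁)).1.isH l₁ :=
          hlab₁ _ (le_max_right _ _) (by omega)
        exact hl (RelLab.isH_unique hk0 hk1)
    -- distance contradiction: B₁ is entered no later than B₀ is approached
    have hd₁ : rdistPtSet X H (p.vert 0) B₁ ≤ (i₁ : ℝ) := by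
      have h1 := rdistPtSet_le (X := X) (H := H) (f := p.vert 0) hi₁B
      have h2 : rdist X H (p.vert 0) (p.vert i₁) = (i₁ : ℝ) := by
        have hilen : (i₁ : ℕ∞) ≤ p.len :=
          le_trans (by exact_mod_cast hij₁.le : ((i₁ : ℕ∞) ≤ (j₁ : ℕ∞))) hj₁len
        simpa using hp 0 i₁ (Nat.zero_le _) hilen
      rw [h2] at h1
      exact h1
    have hd₀ : (i₀ : ℝ) - 1 ≤ rdistPtSet X H (p.vert 0) B₀ :=
      rdistPtSet_ge hgen hp hB₀ hpB₀'
    have hnat : i₁ + 1 ≤ i₀ := by omega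
    have hcast : (i₁ : ℝ) + 1 ≤ (i₀ : ℝ) := by exact_mod_cast hnat
    linarith
  -- Step 2: distances
  have hi₁len : (i₁ : ℕ∞) ≤ p.len :=
    le_trans (by exact_mod_cast hij₁.le : ((i₁ : ℕ∞) ≤ (j₁ : ℕ∞))) hj₁len
  have hgeo : rdist X H (p.vert j₀) (p.vert i₁) = ((i₁ - j₀ : ℕ) : ℝ) :=
    hp j₀ i₁ horder hi₁len
  have hupper : rdistSets X H B₀ B₁ ≤ rdist X H (p.vert j₀) (p.vert i₁) := by
    refine csInf_le ⟨0, ?_⟩ ⟨p.vert j₀, hj₀B, p.vert i₁, hi₁B, rfl⟩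
    rintro r ⟨a, -, b, -, rfl⟩
    exact rdist_nonneg X H a b
  have hcastsub : ((i₁ - j₀ : ℕ) : ℝ) = (i₁ : ℝ) - (j₀ : ℝ) := by
    rw [Nat.cast_sub horder]
  have hlower : ∀ a ∈ B₀, ∀ b ∈ B₁, ((i₁ - j₀ : ℕ) : ℝ) ≤ rdist X H a b := by
    intro a ha b hb
    refine rdist_ge hgen ?_
    intro L hL
    obtain ⟨E₀, hE₀, hE₀len⟩ := exists_short_word (l := l₀) (coset_div_mem hB₀ hi₀B ha)
    obtain ⟨E₁, hE₁, hE₁len⟩ := exists_short_word (l := l₁) (coset_div_mem hB₁ hb hj₁B)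
    have hi₀len : ((0 + i₀ : ℕ) : ℕ∞) ≤ p.len := by
      rw [Nat.zero_add]
      exact le_trans (by exact_mod_cast hij₀.le : ((i₀ : ℕ∞) ≤ (j₀ : ℕ∞)))
        (le_trans (by exact_mod_cast horder : ((j₀ : ℕ∞) ≤ (i₁ : ℕ∞))) hi₁len)
    have hseg0 := segL_prod p 0 i₀ hi₀len
    rw [Nat.zero_add] at hseg0
    have hW : p.vert 0 * (((segL p 0 i₀ ++ (E₀ ++ (L ++ E₁))).map edgeVal).prod)
        = p.vert j₁ := by
      simp only [List.map_append, List.prod_append, ← mul_assoc]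
      rw [hseg0, hE₀, hL, hE₁]
    have hrd : rdist X H (p.vert 0) (p.vert j₁) = (j₁ : ℝ) := by
      simpa using hp 0 j₁ (Nat.zero_le _) hj₁len
    have hle := rdist_le _ hW
    rw [hrd] at hle
    have hlen : (((segL p 0 i₀ ++ (E₀ ++ (L ++ E₁))).length : ℝ))
        = (i₀ : ℝ) + ((E₀.length : ℝ) + ((L.length : ℝ) + (E₁.length : ℝ))) := by
      push_cast [List.length_append, segL_length]
      ring
    rw [hlen] at hle
    have hn0 : (i₀ : ℝ) + 1 ≤ (j₀ : ℝ) := by exact_mod_cast hij₀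
    have hn1 : (i₁ : ℝ) + 1 ≤ (j₁ : ℝ) := by exact_mod_cast hij₁
    rw [hcastsub]
    linarith
  have hlower' : ((i₁ - j₀ : ℕ) : ℝ) ≤ rdistSets X H B₀ B₁ := by
    refine le_csInf ⟨rdist X H (p.vert j₀) (p.vert i₁),
      p.vert j₀, hj₀B, p.vert i₁, hi₁B, rfl⟩ ?_
    rintro r ⟨a, ha, b, hb, rfl⟩
    exact hlower a ha b hb
  rw [hgeo] at hupper ⊢
  exact le_antisymm hlower' hupper


end ArXiv
end
end
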